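/- arXiv:math/0202061 — 2 statements merged into one kernel-verified Lean document; each statement's English description precedes it below -/
import Mathlib

section
/- (Lemma 3.) Let n ≥ 1 and k ≥ 1 be integers and set N = 2n+1. Let H be a finite-dimensional complex inner product space, let U_0 = Id_H, let U_1, …, U_{2n} be unitary operators on H, and let ξ_1, …, ξ_k be vectors in H. Then there exist an integer m ≥ 1, unitary matrices u_1, …, u_n, v_1, …, v_n in U(m), and vectors η_1, …, η_k ∈ ℂ^{m·m} such that, denoting by W_0, W_1, …, W_{2n} the associated tensor-form unitaries: (1) ⟨U_i ξ_a, U_j ξ_b⟩ = ⟨W_i η_a, W_j η_b⟩ for all i ≠ j with 0 ≤ i, j ≤ 2n and all 1 ≤ a, b ≤ k; and (2) ⟨η_a, η_b⟩ = (N² − N) · ⟨ξ_a, ξ_b⟩ for all 1 ≤ a, b ≤ k. -/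
/-!
Pick `g_0 = 0, g_1, …, g_{2n}` in `A × A`, `A = ZMod (2 ^ (N + 1))`, with `g_i` on the first
axis for `i ≤ n` and on the second for `i > n`, forming a Sidon set (`g_a + g_b` determines
`{a, b}`): the points `2 ^ i - 1` work, since binary expansions are unique and the sums do not
wrap around. Let `W_i` translate `ℂ^(Y × Y)`, `Y = A × (ℂ^d ⊕ ℂ^{unordered pairs})`, by `g_i`,
and put `η_a = ∑_{p₁ ≠ p₂} δ_{g_{p₁}} ⊗ U_{p₁} ξ_a ⊗ e_{p₁p₂}` with the tag `e_{p₁p₂}` depending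
only on `{p₁, p₂}`. The terms of `p` and `p'` meet in `⟨W_i η_a, W_j η_b⟩` only if
`p' ∈ {p, p.swap}` and `g_{p₁} - g_i = g_{p'₁} - g_j`. For `i ≠ j` the Sidon property leaves only
`p = (i, j)`, `p' = (j, i)`; for `W_0 = 1` exactly the `N² - N` terms `p' = p` remain.
-/

open scoped BigOperators

/-- The standard Hermitian inner product on `ℂ^ι`, linear in the first variable
and conjugate-linear in the second. -/
noncomputable def cInner {ι : Type*} [Fintype ι] (x y : ι → ℂ) : ℂ :=
  ∑ t, x t * (starRingEnd ℂ) (y t)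

/-- The tensor-form unitaries `W_0 = 1`, `W_i = u_i ⊗ 1` (for `1 ≤ i ≤ n`) and
`W_{n+i} = 1 ⊗ v_i` (for `1 ≤ i ≤ n`) associated with unitary `m × m` matrices
`u_1, …, u_n, v_1, …, v_n`, acting on `ℂ^m ⊗ ℂ^m = ℂ^{m·m}`. -/
noncomputable def tensorFormUnitaries (n m : ℕ)
    (u v : Fin n → Matrix.unitaryGroup (Fin m) ℂ) :
    Fin (2 * n + 1) → Matrix (Fin m × Fin m) (Fin m × Fin m) ℂ := fun i =>
  if _h0 : (i : ℕ) = 0 then 1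
  else if _hn : (i : ℕ) ≤ n then
    Matrix.kroneckerMap (· * ·)
      ((u ⟨(i : ℕ) - 1, by omega⟩ : Matrix (Fin m) (Fin m) ℂ))
      (1 : Matrix (Fin m) (Fin m) ℂ)
  else
    Matrix.kroneckerMap (· * ·)
      (1 : Matrix (Fin m) (Fin m) ℂ)
      ((v ⟨(i : ℕ) - n - 1, by have := i.isLt; omega⟩ : Matrix (Fin m) (Fin m) ℂ))

open Finset

def IsSidon {ι G : Type*} [Add G] (g : ι → G) : Prop :=
  ∀ a b c d, g a + g b = g c + g d → a = c ∧ b = d ∨ a = d ∧ b = c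

namespace IsSidon

variable {ι κ G G' : Type*}

lemma injective [Add G] {g : ι → G} (hg : IsSidon g) : Function.Injective g := fun a b h => by
  simpa using hg a a b b (by rw [h])

lemma comp [Add G] {g : ι → G} (hg : IsSidon g) {f : κ → ι} (hf : Function.Injective f) :
    IsSidon (g ∘ f) := fun a b c d h => by
  simpa only [hf.eq_iff] using hg _ _ _ _ h

lemma of_comp [AddZeroClass G] [AddZeroClass G'] {g : ι → G} (f : G →+ G')
    (hfg : IsSidon (f ∘ g)) : IsSidon g := fun a b c d h =>
  hfg a b c d (by simp only [Function.comp_apply, ← map_add, h])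

lemma sub_const [AddCommGroup G] {g : ι → G} (hg : IsSidon g) (x : G) :
    IsSidon (fun i => g i - x) := fun a b c d h =>
  hg a b c d (by simpa only [sub_add_sub_comm, sub_left_inj] using h)

lemma natCast {g : ι → ℕ} (hg : IsSidon g) {M : ℕ} (hM : ∀ i j, g i + g j < M) :
    IsSidon (fun i => (g i : ZMod M)) := fun a b c d h => by
  apply hg
  have := congrArg ZMod.val h
  rwa [← Nat.cast_add, ← Nat.cast_add, ZMod.val_natCast_of_lt (hM a b),
    ZMod.val_natCast_of_lt (hM c d)] at this

lemma sub_eq_sub_iff [AddCommGroup G] {g : ι → G} (hg : IsSidon g) {a b i j : ι} :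
    g a - g i = g b - g j ↔ a = b ∧ j = i ∨ a = i ∧ j = b := by
  refine ⟨fun h => hg a j b i (sub_eq_sub_iff_add_eq_add.mp h), ?_⟩
  rintro (⟨rfl, rfl⟩ | ⟨rfl, rfl⟩) <;> simp

end IsSidon

lemma two_pow_add_two_pow_lt {a b c d : ℕ} (hab : a ≤ b) (hbd : b < d) :
    2 ^ a + 2 ^ b < 2 ^ c + 2 ^ d := by
  have : 2 ^ a + 2 ^ b ≤ 2 ^ d := calc
    2 ^ a + 2 ^ b ≤ 2 ^ b + 2 ^ b := by gcongr; norm_num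
    _ = 2 ^ (b + 1) := by ring
    _ ≤ 2 ^ d := Nat.pow_le_pow_right two_pos hbd
  have := Nat.two_pow_pos c
  omega

lemma two_pow_add_two_pow_inj_of_le {a b c d : ℕ} (hab : a ≤ b) (hcd : c ≤ d)
    (h : 2 ^ a + 2 ^ b = 2 ^ c + 2 ^ d) : a = c ∧ b = d := by
  obtain rfl : b = d := by
    rcases lt_trichotomy b d with hbd | rfl | hdb
    · exact absurd h (two_pow_add_two_pow_lt hab hbd).ne
    · rfl
    · exact absurd h (two_pow_add_two_pow_lt hcd hdb).ne'
  exact ⟨Nat.pow_right_injective le_rfl (by simpa using h), rfl⟩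

lemma isSidon_two_pow : IsSidon (fun a : ℕ => 2 ^ a) := by
  intro a b c d h
  rcases le_total a b with hab | hba <;> rcases le_total c d with hcd | hdc
  · exact .inl (two_pow_add_two_pow_inj_of_le hab hcd h)
  · exact .inr (two_pow_add_two_pow_inj_of_le hab hdc (h.trans (add_comm _ _)))
  · exact .inr (two_pow_add_two_pow_inj_of_le hba hcd ((add_comm _ _).trans h)).symm
  · exact .inl (two_pow_add_two_pow_inj_of_le hba hdc (by rw [add_comm, h, add_comm])).symm

lemma isSidon_two_pow_sub_one (N : ℕ) :
    IsSidon (fun i : Fin N => ((2 ^ (i : ℕ) : ℕ) : ZMod (2 ^ (N + 1))) - 1) := by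
  refine ((isSidon_two_pow.comp Fin.val_injective).natCast fun i j => ?_).sub_const 1
  have hi := Nat.pow_lt_pow_right (a := 2) (by norm_num) i.isLt
  have hj := Nat.pow_lt_pow_right (a := 2) (by norm_num) j.isLt
  simp only [Function.comp_apply, pow_succ]
  omega

section cInner

variable {X Y : Type*} [Fintype X] [Fintype Y]

lemma cInner_comp_equiv (σ : X ≃ Y) (x y : Y → ℂ) : cInner (x ∘ σ) (y ∘ σ) = cInner x y :=
  σ.sum_comp fun t => x t * (starRingEnd ℂ) (y t)

lemma cInner_sum_left {κ : Type*} (s : Finset κ) (x : κ → X → ℂ) (y : X → ℂ) :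
    cInner (∑ p ∈ s, x p) y = ∑ p ∈ s, cInner (x p) y := by
  simp only [cInner, Finset.sum_apply, Finset.sum_mul]
  exact Finset.sum_comm

lemma cInner_sum_right {κ : Type*} (s : Finset κ) (x : X → ℂ) (y : κ → X → ℂ) :
    cInner x (∑ p ∈ s, y p) = ∑ p ∈ s, cInner x (y p) := by
  simp only [cInner, Finset.sum_apply, map_sum, Finset.mul_sum]
  exact Finset.sum_comm

def tensorVec (x : X → ℂ) (y : Y → ℂ) : X × Y → ℂ := fun q => x q.1 * y q.2

lemma cInner_tensorVec (x x' : X → ℂ) (y y' : Y → ℂ) :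
    cInner (tensorVec x y) (tensorVec x' y') = cInner x x' * cInner y y' := by
  simp only [cInner, tensorVec, Fintype.sum_prod_type, Finset.sum_mul_sum, map_mul]
  exact Finset.sum_congr rfl fun _ _ => Finset.sum_congr rfl fun _ _ => by ring

lemma cInner_single [DecidableEq X] (a b : X) :
    cInner (Pi.single a 1) (Pi.single b 1) = if a = b then 1 else 0 := by
  simp [cInner, Pi.single_apply, eq_comm]

lemma cInner_sumElim_zero (x x' : X → ℂ) :
    cInner (Sum.elim x (0 : Y → ℂ)) (Sum.elim x' 0) = cInner x x' := by
  simp [cInner, Fintype.sum_sum_type]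

lemma cInner_repr {D H : Type*} [Fintype D] [NormedAddCommGroup H] [InnerProductSpace ℂ H]
    (b : OrthonormalBasis D ℂ H) (x y : H) :
    cInner (b.repr x).ofLp (b.repr y).ofLp = inner ℂ y x := by
  simp only [cInner, OrthonormalBasis.repr_apply_apply, inner_conj_symm]
  rw [← b.sum_inner_mul_inner]
  exact Finset.sum_congr rfl fun _ _ => mul_comm _ _

end cInner

def shiftFst {A P : Type*} [AddGroup A] (a : A) : Equiv.Perm (A × P) :=
  (Equiv.addRight a).prodCongr (Equiv.refl P)

lemma shiftFst_zero {A P : Type*} [AddGroup A] : shiftFst (0 : A) = (1 : Equiv.Perm (A × P)) := by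
  ext <;> simp [shiftFst]

section SidonModel

variable {ι A D : Type*} [Fintype ι] [DecidableEq ι] [DecidableEq A] [DecidableEq D]

def sidonVec (g : ι → A × A) (w : ι → D → ℂ) :
    (A × (D ⊕ Sym2 ι)) × (A × (D ⊕ Sym2 ι)) → ℂ :=
  ∑ p ∈ univ.offDiag, tensorVec (tensorVec (Pi.single (g p.1).1 1) (Sum.elim (w p.1) 0))
    (tensorVec (Pi.single (g p.1).2 1) (Pi.single (Sum.inr s(p.1, p.2)) 1))

lemma sidonVec_comp_shiftFst [AddCommGroup A] (g : ι → A × A) (w : ι → D → ℂ) (x : A × A) :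
    sidonVec g w ∘ (shiftFst x.1).prodCongr (shiftFst x.2) = sidonVec (fun i => g i - x) w := by
  funext q
  simp [sidonVec, tensorVec, shiftFst, Finset.sum_apply, Pi.single_apply, ← eq_sub_iff_add_eq]

variable [Fintype A] [Fintype D]

lemma cInner_sidonVec (g g' : ι → A × A) (w w' : ι → D → ℂ) :
    cInner (sidonVec g w) (sidonVec g' w') = ∑ p ∈ univ.offDiag, ∑ p' ∈ univ.offDiag,
      if g p.1 = g' p'.1 ∧ s(p.1, p.2) = s(p'.1, p'.2) then cInner (w p.1) (w' p'.1) else 0 := by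
  rw [sidonVec, cInner_sum_left]
  refine sum_congr rfl fun p _ => ?_
  rw [sidonVec, cInner_sum_right]
  refine sum_congr rfl fun p' _ => ?_
  simp only [cInner_tensorVec, cInner_single, cInner_sumElim_zero, Sum.inr.injEq]
  split_ifs <;> simp_all [Prod.ext_iff]

lemma cInner_sidonVec_self {g : ι → A × A} (hg : Function.Injective g) (w w' : ι → D → ℂ) :
    cInner (sidonVec g w) (sidonVec g w') = ∑ p ∈ univ.offDiag, cInner (w p.1) (w' p.1) := by
  rw [cInner_sidonVec]
  refine sum_congr rfl fun p hp => ?_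
  rw [sum_eq_single_of_mem p hp (fun p' hp' hne => if_neg ?_), if_pos ⟨rfl, rfl⟩]
  simp only [mem_offDiag, mem_univ, true_and] at hp hp'
  rw [hg.eq_iff, Sym2.eq_iff]
  grind

lemma IsSidon.cInner_sidonVec_sub [AddCommGroup A] {g : ι → A × A} (hg : IsSidon g) {i j : ι}
    (hij : i ≠ j) (w w' : ι → D → ℂ) :
    cInner (sidonVec (fun l => g l - g i) w) (sidonVec (fun l => g l - g j) w') =
      cInner (w i) (w' j) := by
  have key : ∀ p ∈ univ.offDiag, ∀ p' ∈ univ.offDiag,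
      (g p.1 - g i = g p'.1 - g j ∧ s(p.1, p.2) = s(p'.1, p'.2)) ↔ p = (i, j) ∧ p' = (j, i) := by
    rintro ⟨p₁, p₂⟩ hp ⟨q₁, q₂⟩ hq
    simp only [mem_offDiag, mem_univ, true_and] at hp hq
    rw [hg.sub_eq_sub_iff, Sym2.eq_iff, Prod.mk.injEq, Prod.mk.injEq]
    grind
  have hij' : (i, j) ∈ univ.offDiag := by simpa using hij
  have hji' : (j, i) ∈ univ.offDiag := by simpa using hij.symm
  rw [cInner_sidonVec, sum_eq_single_of_mem _ hij', sum_eq_single_of_mem _ hji',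
    if_pos ((key _ hij' _ hji').mpr ⟨rfl, rfl⟩)]
  · exact fun p' hp' hne => if_neg fun h => hne ((key _ hij' _ hp').mp h).2
  · exact fun p hp hne => sum_eq_zero fun p' hp' => if_neg fun h => hne ((key _ hp _ hp').mp h).1

end SidonModel

section PermMatrix

open Equiv
open scoped Matrix

lemma kronecker_permMatrix {X Y : Type*} [DecidableEq X] [DecidableEq Y] (σ : Perm X)
    (τ : Perm Y) :
    Matrix.kroneckerMap (· * ·) (σ.permMatrix ℂ) (τ.permMatrix ℂ) =
      Perm.permMatrix ℂ (σ.prodCongr τ) := by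
  ext i j
  simp only [Matrix.kroneckerMap_apply, PEquiv.toMatrix_apply, toPEquiv_apply, Option.mem_def,
    Option.some.injEq, prodCongr_apply, Prod.map, Prod.ext_iff]
  split_ifs <;> simp_all

lemma permMatrix_mem_unitaryGroup {X : Type*} [DecidableEq X] [Fintype X] (σ : Perm X) :
    σ.permMatrix ℂ ∈ Matrix.unitaryGroup X ℂ := by
  rw [Matrix.mem_unitaryGroup_iff, Matrix.star_eq_conjTranspose, Matrix.conjTranspose_permMatrix,
    ← Matrix.permMatrix_mul, inv_mul_cancel, Matrix.permMatrix_one]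

variable {X : Type*} {m : ℕ}

def permUnitary (e : Fin m ≃ X) (σ : Perm X) : Matrix.unitaryGroup (Fin m) ℂ :=
  ⟨(e.symm.permCongr σ).permMatrix ℂ, permMatrix_mem_unitaryGroup _⟩

lemma permUnitary_one (e : Fin m ≃ X) : permUnitary e 1 = 1 := by
  ext : 1
  simp [permUnitary, Matrix.one_apply]

lemma kronecker_permUnitary_mulVec (e : Fin m ≃ X) (σ τ : Perm X) (x : X × X → ℂ) :
    Matrix.kroneckerMap (· * ·) (permUnitary e σ : Matrix (Fin m) (Fin m) ℂ)
      (permUnitary e τ : Matrix (Fin m) (Fin m) ℂ) *ᵥ (x ∘ e.prodCongr e) =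
        (x ∘ σ.prodCongr τ) ∘ e.prodCongr e := by
  rw [permUnitary, permUnitary, kronecker_permMatrix, Matrix.permMatrix_mulVec]
  funext ⟨a, b⟩
  simp [permCongr_apply]

end PermMatrix

section TensorForm

variable {A P : Type*} [AddCommGroup A] {n m : ℕ}

def axisSplit (x : Fin (2 * n + 1) → A) (i : Fin (2 * n + 1)) : A × A :=
  if (i : ℕ) ≤ n then (x i, 0) else (0, x i)

lemma isSidon_axisSplit {x : Fin (2 * n + 1) → A} (hx : IsSidon x) : IsSidon (axisSplit x) := by
  have hsum : (AddMonoidHom.id A).coprod (AddMonoidHom.id A) ∘ axisSplit x = x := by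
    funext i
    by_cases hi : (i : ℕ) ≤ n <;> simp [axisSplit, hi]
  exact IsSidon.of_comp _ (hsum ▸ hx)

def leftUnitaries (e : Fin m ≃ A × P) (x : Fin (2 * n + 1) → A) (t : Fin n) :
    Matrix.unitaryGroup (Fin m) ℂ :=
  permUnitary e (shiftFst (x ⟨t + 1, by omega⟩))

def rightUnitaries (e : Fin m ≃ A × P) (x : Fin (2 * n + 1) → A) (t : Fin n) :
    Matrix.unitaryGroup (Fin m) ℂ :=
  permUnitary e (shiftFst (x ⟨n + 1 + t, by omega⟩))

lemma tensorFormUnitaries_eq_kronecker (e : Fin m ≃ A × P) {x : Fin (2 * n + 1) → A}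
    (hx : x 0 = 0) (i : Fin (2 * n + 1)) :
    tensorFormUnitaries n m (leftUnitaries e x) (rightUnitaries e x) i =
      Matrix.kroneckerMap (· * ·)
        (permUnitary e (shiftFst (axisSplit x i).1) : Matrix (Fin m) (Fin m) ℂ)
        (permUnitary e (shiftFst (axisSplit x i).2) : Matrix (Fin m) (Fin m) ℂ) := by
  by_cases h0 : (i : ℕ) = 0
  · obtain rfl : i = 0 := Fin.ext h0
    simp [tensorFormUnitaries, axisSplit, hx, shiftFst_zero, permUnitary_one]
  by_cases hn : (i : ℕ) ≤ n
  · have hi : (⟨(i : ℕ) - 1 + 1, by omega⟩ : Fin (2 * n + 1)) = i := Fin.ext (by simp; omega)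
    simp [tensorFormUnitaries, axisSplit, h0, hn, leftUnitaries, hi, shiftFst_zero,
      permUnitary_one]
  · have hi : (⟨n + 1 + ((i : ℕ) - n - 1), by omega⟩ : Fin (2 * n + 1)) = i :=
      Fin.ext (by simp; omega)
    simp [tensorFormUnitaries, axisSplit, h0, hn, rightUnitaries, hi, shiftFst_zero,
      permUnitary_one]

end TensorForm

theorem statement1_general (n k : ℕ)
    (H : Type*) [NormedAddCommGroup H] [InnerProductSpace ℂ H] [FiniteDimensional ℂ H]
    (U : Fin (2 * n + 1) → H ≃ₗᵢ[ℂ] H)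
    (ξ : Fin k → H) :
    ∃ (m : ℕ), 1 ≤ m ∧
      ∃ (u v : Fin n → Matrix.unitaryGroup (Fin m) ℂ)
        (η : Fin k → (Fin m × Fin m) → ℂ),
        (∀ i j : Fin (2 * n + 1), i ≠ j → ∀ a b : Fin k,
          (@inner ℂ H _ (U j (ξ b)) (U i (ξ a))) =
            cInner ((tensorFormUnitaries n m u v i).mulVec (η a))
              ((tensorFormUnitaries n m u v j).mulVec (η b))) ∧
        (∀ a b : Fin k,
          cInner (η a) (η b) =
            ((2 * n + 1 : ℂ) ^ 2 - (2 * n + 1)) * @inner ℂ H _ (ξ b) (ξ a)) := by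
  let x := fun i : Fin (2 * n + 1) => ((2 ^ (i : ℕ) : ℕ) : ZMod (2 ^ (2 * n + 1 + 1))) - 1
  have hx0 : x 0 = 0 := by simp [x]
  have hg : IsSidon (axisSplit x) := isSidon_axisSplit (isSidon_two_pow_sub_one _)
  let b := stdOrthonormalBasis ℂ H
  let e := (Fintype.equivFin
    (ZMod (2 ^ (2 * n + 1 + 1)) × (Fin (Module.finrank ℂ H) ⊕ Sym2 (Fin (2 * n + 1))))).symm
  let w := fun (a : Fin k) (i : Fin (2 * n + 1)) => (b.repr (U i (ξ a))).ofLp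
  refine ⟨_, Fintype.card_pos, leftUnitaries e x, rightUnitaries e x,
    fun a => sidonVec (axisSplit x) (w a) ∘ e.prodCongr e, fun i j hij a a' => ?_, fun a a' => ?_⟩
  · rw [tensorFormUnitaries_eq_kronecker e hx0, tensorFormUnitaries_eq_kronecker e hx0,
      kronecker_permUnitary_mulVec, kronecker_permUnitary_mulVec, cInner_comp_equiv,
      sidonVec_comp_shiftFst, sidonVec_comp_shiftFst, hg.cInner_sidonVec_sub hij, cInner_repr]
  · rw [cInner_comp_equiv, cInner_sidonVec_self hg.injective]
    simp only [w, cInner_repr, LinearIsometryEquiv.inner_map_map, sum_const, offDiag_card,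
      card_univ, Fintype.card_fin, nsmul_eq_mul]
    rw [Nat.cast_sub (Nat.le_mul_self _)]
    push_cast
    ring

/-- Lemma 3: any finite-dimensional triplet can be matched, off the
diagonal, by a triplet in tensor position whose vectors are longer by the factor
`(N² − N)^{1/2}`, `N = 2n + 1`.  Inner products are written in the paper's
convention (linear in the first variable), i.e. `⟨x, y⟩ = ⟪y, x⟫_ℂ` in Mathlib. -/
theorem statement1 (n k : ℕ) (hn : 1 ≤ n) (hk : 1 ≤ k)
    (H : Type*) [NormedAddCommGroup H] [InnerProductSpace ℂ H] [FiniteDimensional ℂ H]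
    (U : Fin (2 * n + 1) → H ≃ₗᵢ[ℂ] H)
    (hU0 : U 0 = LinearIsometryEquiv.refl ℂ H)
    (ξ : Fin k → H) :
    ∃ (m : ℕ), 1 ≤ m ∧
      ∃ (u v : Fin n → Matrix.unitaryGroup (Fin m) ℂ)
        (η : Fin k → (Fin m × Fin m) → ℂ),
        (∀ i j : Fin (2 * n + 1), i ≠ j → ∀ a b : Fin k,
          (@inner ℂ H _ (U j (ξ b)) (U i (ξ a))) =
            cInner ((tensorFormUnitaries n m u v i).mulVec (η a))
              ((tensorFormUnitaries n m u v j).mulVec (η b))) ∧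
        (∀ a b : Fin k,
          cInner (η a) (η b) =
            ((2 * n + 1 : ℂ) ^ 2 - (2 * n + 1)) * @inner ℂ H _ (ξ b) (ξ a)) :=
  statement1_general n k H U ξ
end

section
/- (Elementary tensor-position configurations with prescribed Gram matrix, the construction in the proof of Lemma 2.) Let n ≥ 1 be an integer, let ε ∈ ℂ with |ε| = 1, and let i_0, j_0 ∈ {0, 1, …, 2n} with i_0 ≠ j_0. Then there exist an integer m ≥ 1, unitary matrices u_1, …, u_n, v_1, …, v_n in U(m), and a vector η ∈ ℂ^{m·m} of norm 1 such that, denoting by W_0, W_1, …, W_{2n} the associated tensor-form unitaries, for all 0 ≤ i, j ≤ 2n: ⟨W_i η, W_j η⟩ = 1 if i = j; ⟨W_{i_0} η, W_{j_0} η⟩ = ε; ⟨W_{j_0} η, W_{i_0} η⟩ = conj(ε); and ⟨W_i η, W_j η⟩ = 0 whenever i ≠ j and {i, j} ⊄ {i_0, j_0}. -/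
open scoped BigOperators

/-!
Take `m = 2n + 1` and diagonal unitaries, so that every `W_i` is diagonal, say with diagonal
`d_i ⊗ 1` or `1 ⊗ d_i`. On the maximally entangled vector `η = m^{-1/2} ∑ₜ eₜ ⊗ eₜ` both act as
`d_i`, hence `⟨W_i η, W_j η⟩ = m⁻¹ ⟨d_i, d_j⟩`. Taking `d_i = μ_i χ_{c(i)}` for characters
`χ_a(t) = ω^{a t}` of `ℤ/m`, orthogonality of characters gives the Gram matrix
`[c(i) = c(j)] μ_i conj μ_j`. Giving `i₀` the frequency of `j₀` and the phase `ε`, and every other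
index its own frequency and phase `1`, produces the prescribed matrix; `W_0 = 1` forces
`c(0) = 0` and `μ_0 = 1`, so one first arranges `i₀ ≠ 0` using the symmetry
`(i₀, j₀, ε) ↦ (j₀, i₀, conj ε)` of the statement.
-/

open ComplexConjugate

namespace Matrix

theorem diagonal_mem_unitaryGroup {ι 𝕜 : Type*} [Fintype ι] [DecidableEq ι] [RCLike 𝕜]
    {d : ι → 𝕜} (hd : ∀ t, ‖d t‖ = 1) : diagonal d ∈ unitaryGroup ι 𝕜 := by
  rw [mem_unitaryGroup_iff, star_eq_conjTranspose, diagonal_conjTranspose, diagonal_mul_diagonal,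
    ← diagonal_one]
  congr 1
  ext t
  simp [RCLike.mul_conj, hd t]

end Matrix

section cInner

variable {ι : Type*} [Fintype ι]

theorem cInner_smul_smul (a b : ℂ) (x y : ι → ℂ) :
    cInner (a • x) (b • y) = a * conj b * cInner x y := by
  simp only [cInner, Finset.mul_sum, Pi.smul_apply, smul_eq_mul, map_mul]
  exact Finset.sum_congr rfl fun _ _ => by ring

theorem cInner_self (x : ι → ℂ) : cInner x x = ((∑ t, ‖x t‖ ^ 2 : ℝ) : ℂ) := by
  simp [cInner, Complex.mul_conj']

theorem IsPrimitiveRoot.cInner_pow_mul {ω : ℂ} {m : ℕ} (hω : IsPrimitiveRoot ω m) (a b : Fin m) :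
    cInner (fun t : Fin m => ω ^ ((a : ℕ) * t)) (fun t => ω ^ ((b : ℕ) * t)) =
      if a = b then (m : ℂ) else 0 := by
  have hm : m ≠ 0 := (Fin.pos a).ne'
  set ζ := ω ^ ((a : ℤ) - b)
  have hterm : ∀ t : Fin m, ω ^ ((a : ℕ) * t) * conj (ω ^ ((b : ℕ) * t)) = ζ ^ (t : ℕ) := by
    intro t
    rw [map_pow, ← Complex.inv_eq_conj (hω.norm'_eq_one hm), ← zpow_natCast, ← zpow_natCast,
      ← zpow_natCast, inv_zpow', ← zpow_add₀ (hω.ne_zero hm), ← zpow_mul]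
    push_cast
    ring_nf
  simp only [cInner, hterm, Fin.sum_univ_eq_sum_range (fun t => ζ ^ t)]
  split_ifs with hab
  · simp [ζ, hab]
  · have hζ1 : ζ ≠ 1 := by
      rw [Ne, hω.zpow_eq_one_iff_dvd]
      intro hdvd
      refine hab (Fin.ext ?_)
      have := Int.eq_zero_of_abs_lt_dvd hdvd (by rw [abs_lt]; omega)
      omega
    have hζm : ζ ^ m = 1 := by
      rw [← zpow_natCast, ← zpow_mul, mul_comm, zpow_mul, zpow_natCast, hω.pow_eq_one, one_zpow]
    rw [geom_sum_eq hζ1, hζm, sub_self, zero_div]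

end cInner

section diagEmbed

open Matrix

variable {ι α : Type*} [DecidableEq ι]

/-- The vector `∑ₜ x t • (eₜ ⊗ eₜ)` of `α^ι ⊗ α^ι`. -/
def diagEmbed [Zero α] (x : ι → α) : ι × ι → α := fun p => if p.1 = p.2 then x p.1 else 0

theorem cInner_diagEmbed [Fintype ι] (x y : ι → ℂ) :
    cInner (diagEmbed x) (diagEmbed y) = cInner x y := by
  simp only [cInner, diagEmbed, Fintype.sum_prod_type]
  refine Finset.sum_congr rfl fun s _ => ?_
  simp [apply_ite, ite_mul]

variable [Fintype ι] [Semiring α]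

theorem diagonal_kronecker_one_mulVec_diagEmbed (a x : ι → α) :
    kroneckerMap (· * ·) (diagonal a) (1 : Matrix ι ι α) *ᵥ diagEmbed x = diagEmbed (a * x) := by
  ext ⟨s, t⟩
  rw [← diagonal_one, diagonal_kronecker_diagonal, mulVec_diagonal]
  by_cases h : s = t <;> simp [diagEmbed, h]

theorem one_kronecker_diagonal_mulVec_diagEmbed (b x : ι → α) :
    kroneckerMap (· * ·) (1 : Matrix ι ι α) (diagonal b) *ᵥ diagEmbed x = diagEmbed (b * x) := by
  ext ⟨s, t⟩
  rw [← diagonal_one, diagonal_kronecker_diagonal, mulVec_diagonal]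
  by_cases h : s = t <;> simp [diagEmbed, h]

end diagEmbed

noncomputable def maxEntangled (m : ℕ) : Fin m × Fin m → ℂ :=
  diagEmbed fun _ => (((Real.sqrt m)⁻¹ : ℝ) : ℂ)

theorem tensorFormUnitaries_zero (n m : ℕ) (u v : Fin n → Matrix.unitaryGroup (Fin m) ℂ) :
    tensorFormUnitaries n m u v 0 = 1 := by
  simp [tensorFormUnitaries]

section diagonalConfiguration

open Matrix

variable {n m : ℕ} (d : Fin (2 * n + 1) → Fin m → ℂ) (hd : ∀ i t, ‖d i t‖ = 1)

def diagonalLeft (k : Fin n) : unitaryGroup (Fin m) ℂ :=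
  ⟨diagonal (d ⟨k + 1, by omega⟩), diagonal_mem_unitaryGroup (hd _)⟩

def diagonalRight (k : Fin n) : unitaryGroup (Fin m) ℂ :=
  ⟨diagonal (d ⟨n + k + 1, by omega⟩), diagonal_mem_unitaryGroup (hd _)⟩

theorem tensorFormUnitaries_diagonal_mulVec_diagEmbed (hd0 : d 0 = 1) (i : Fin (2 * n + 1))
    (x : Fin m → ℂ) :
    tensorFormUnitaries n m (diagonalLeft d hd) (diagonalRight d hd) i *ᵥ diagEmbed x =
      diagEmbed (d i * x) := by
  unfold tensorFormUnitaries
  split_ifs with h0 hle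
  · obtain rfl : i = 0 := Fin.ext h0
    simp [hd0]
  · rw [← diagonal_kronecker_one_mulVec_diagEmbed]
    exact congrArg (fun k => kroneckerMap (· * ·) (diagonal (d k)) 1 *ᵥ diagEmbed x)
      (Fin.ext (by simp only; omega))
  · rw [← one_kronecker_diagonal_mulVec_diagEmbed]
    exact congrArg (fun k => kroneckerMap (· * ·) 1 (diagonal (d k)) *ᵥ diagEmbed x)
      (Fin.ext (by simp only; omega))

theorem cInner_tensorFormUnitaries_diagonal_mulVec_maxEntangled (hd0 : d 0 = 1)
    (i j : Fin (2 * n + 1)) :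
    cInner (tensorFormUnitaries n m (diagonalLeft d hd) (diagonalRight d hd) i *ᵥ maxEntangled m)
        (tensorFormUnitaries n m (diagonalLeft d hd) (diagonalRight d hd) j *ᵥ maxEntangled m) =
      cInner (d i) (d j) / m := by
  set r : ℂ := (((Real.sqrt m)⁻¹ : ℝ) : ℂ)
  have hsmul : ∀ k, d k * (fun _ => r) = r • d k := fun k => by ext; simp [mul_comm]
  have hr : r * conj r = (m : ℂ)⁻¹ := by
    rw [Complex.conj_ofReal, ← Complex.ofReal_mul, ← mul_inv,
      Real.mul_self_sqrt (Nat.cast_nonneg m)]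
    push_cast
    rfl
  rw [maxEntangled, tensorFormUnitaries_diagonal_mulVec_diagEmbed d hd hd0,
    tensorFormUnitaries_diagonal_mulVec_diagEmbed d hd hd0, cInner_diagEmbed, hsmul, hsmul,
    cInner_smul_smul, hr, inv_mul_eq_div]

end diagonalConfiguration

theorem exists_tensorFormUnitaries_cInner_eq_ite (n : ℕ) (c : Fin (2 * n + 1) → Fin (2 * n + 1))
    (μ : Fin (2 * n + 1) → ℂ) (hc0 : c 0 = 0) (hμ0 : μ 0 = 1) (hμ : ∀ i, ‖μ i‖ = 1) :
    ∃ (u v : Fin n → Matrix.unitaryGroup (Fin (2 * n + 1)) ℂ)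
      (η : Fin (2 * n + 1) × Fin (2 * n + 1) → ℂ), ∀ i j,
      cInner ((tensorFormUnitaries n _ u v i).mulVec η) ((tensorFormUnitaries n _ u v j).mulVec η) =
        if c i = c j then μ i * conj (μ j) else 0 := by
  obtain ⟨ω, hω⟩ : ∃ ω : ℂ, IsPrimitiveRoot ω (2 * n + 1) :=
    ⟨_, Complex.isPrimitiveRoot_exp _ (by omega)⟩
  set d : Fin (2 * n + 1) → Fin (2 * n + 1) → ℂ := fun i =>
    μ i • fun t : Fin (2 * n + 1) => ω ^ ((c i : ℕ) * t)
  have hd : ∀ i t, ‖d i t‖ = 1 := by simp [d, hμ, hω.norm'_eq_one]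
  have hd0 : d 0 = 1 := by ext; simp [d, hc0, hμ0]
  refine ⟨diagonalLeft d hd, diagonalRight d hd, maxEntangled _, fun i j => ?_⟩
  rw [cInner_tensorFormUnitaries_diagonal_mulVec_maxEntangled d hd hd0, cInner_smul_smul,
    hω.cInner_pow_mul]
  split_ifs
  · exact mul_div_cancel_right₀ _ (Nat.cast_ne_zero.2 (by omega))
  · simp

theorem statement4_general (n : ℕ) (ε : ℂ) (hε : ‖ε‖ = 1)
    (i₀ j₀ : Fin (2 * n + 1)) (hij : i₀ ≠ j₀) :
    ∃ (m : ℕ), 1 ≤ m ∧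
      ∃ (u v : Fin n → Matrix.unitaryGroup (Fin m) ℂ)
        (η : (Fin m × Fin m) → ℂ),
        (∑ t, ‖η t‖ ^ 2) = 1 ∧
        (∀ i : Fin (2 * n + 1),
          cInner ((tensorFormUnitaries n m u v i).mulVec η)
            ((tensorFormUnitaries n m u v i).mulVec η) = 1) ∧
        cInner ((tensorFormUnitaries n m u v i₀).mulVec η)
            ((tensorFormUnitaries n m u v j₀).mulVec η) = ε ∧
        cInner ((tensorFormUnitaries n m u v j₀).mulVec η)
            ((tensorFormUnitaries n m u v i₀).mulVec η) = (starRingEnd ℂ) ε ∧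
        (∀ i j : Fin (2 * n + 1), i ≠ j →
          ¬ (({i, j} : Set (Fin (2 * n + 1))) ⊆ {i₀, j₀}) →
            cInner ((tensorFormUnitaries n m u v i).mulVec η)
              ((tensorFormUnitaries n m u v j).mulVec η) = 0) := by
  wlog hi₀ : i₀ ≠ 0 generalizing ε i₀ j₀
  · obtain ⟨m, hm, u, v, η, hη, hdiag, hj₀i₀, hi₀j₀, hoff⟩ :=
      this (conj ε) (by simpa) j₀ i₀ hij.symm (by rintro rfl; exact hi₀ hij)
    refine ⟨m, hm, u, v, η, hη, hdiag, by simpa using hi₀j₀, hj₀i₀, fun i j hne hsub => ?_⟩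
    exact hoff i j hne (by rwa [Set.pair_comm j₀ i₀])
  obtain ⟨u, v, η, hgram⟩ := exists_tensorFormUnitaries_cInner_eq_ite n
    (fun i => if i = i₀ then j₀ else i) (fun i => if i = i₀ then ε else 1)
    (by simp [Ne.symm hi₀]) (by simp [Ne.symm hi₀]) (fun i => by split_ifs <;> simp [hε])
  have hdiag : ∀ i, cInner ((tensorFormUnitaries n _ u v i).mulVec η)
      ((tensorFormUnitaries n _ u v i).mulVec η) = 1 := fun i => by
    rw [hgram, if_pos rfl]; split_ifs <;> simp [Complex.mul_conj', hε]
  refine ⟨2 * n + 1, by omega, u, v, η, ?_, hdiag, ?_, ?_, fun i j hne hsub => ?_⟩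
  · have h := hdiag 0
    rwa [tensorFormUnitaries_zero, Matrix.one_mulVec, cInner_self, Complex.ofReal_eq_one] at h
  · simp [hgram, hij.symm]
  · simp [hgram, hij.symm]
  · rw [hgram, if_neg]
    contrapose! hsub
    intro x hx
    split_ifs at hsub <;> aesop

/-- elementary tensor-position configurations with prescribed Gram
matrix (the construction in the proof of Lemma 2). -/
theorem statement4 (n : ℕ) (hn : 1 ≤ n) (ε : ℂ) (hε : ‖ε‖ = 1)
    (i₀ j₀ : Fin (2 * n + 1)) (hij : i₀ ≠ j₀) :
    ∃ (m : ℕ), 1 ≤ m ∧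
      ∃ (u v : Fin n → Matrix.unitaryGroup (Fin m) ℂ)
        (η : (Fin m × Fin m) → ℂ),
        (∑ t, ‖η t‖ ^ 2) = 1 ∧
        (∀ i : Fin (2 * n + 1),
          cInner ((tensorFormUnitaries n m u v i).mulVec η)
            ((tensorFormUnitaries n m u v i).mulVec η) = 1) ∧
        cInner ((tensorFormUnitaries n m u v i₀).mulVec η)
            ((tensorFormUnitaries n m u v j₀).mulVec η) = ε ∧
        cInner ((tensorFormUnitaries n m u v j₀).mulVec η)
            ((tensorFormUnitaries n m u v i₀).mulVec η) = (starRingEnd ℂ) ε ∧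
        (∀ i j : Fin (2 * n + 1), i ≠ j →
          ¬ (({i, j} : Set (Fin (2 * n + 1))) ⊆ {i₀, j₀}) →
            cInner ((tensorFormUnitaries n m u v i).mulVec η)
              ((tensorFormUnitaries n m u v j).mulVec η) = 0) :=
  statement4_general n ε hε i₀ j₀ hij
end
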